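/- For each j ∈ I, define σ'_j : 𝒯^I → 𝒯^I componentwise by σ'_j(λ)_i = λ_i · ∏_{k=1}^{|a_{ji}|} (τ_{−(ħ d_j/2)(|a_{ji}|−2k)} λ_j)^{ε_{ij}}. Then σ'_j is a two-sided inverse of σ_j, i.e., σ_j∘σ'_j = σ'_j∘σ_j = id on 𝒯^I. -/

import Mathlib

/-!
Braid group action on `𝒯^I` (Corollary `C:T_1-rep` of the paper), where
`𝒯 = 1 + X·ℂ[[X]]` is the group of power series with constant term 1.
-/

open PowerSeries

noncomputable section

/-- The value `m_{ij}` of the Coxeter matrix attached to `t = a_{ij}·a_{ji}`: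
`2, 3, 4, 6` according as `t = 0, 1, 2, 3`. -/
def coxEntry (t : ℤ) : ℕ :=
  if t = 0 then 2 else if t = 1 then 3 else if t = 2 then 4 else 6

/-- A generalized Cartan matrix `(a_{ij})` of finite type, with symmetrizing positive
integers `(d_i)`, together with its Coxeter matrix `(m_{ij})` whose associated Coxeter
group is required to be finite. -/
structure FiniteCartan (I : Type) where
  a : I → I → ℤ
  d : I → ℤ
  cm : CoxeterMatrix I
  a_diag : ∀ i, a i i = 2
  a_offdiag_nonpos : ∀ i j, i ≠ j → a i j ≤ 0
  d_pos : ∀ i, 0 < d i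
  d_symmetrizes : ∀ i j, d i * a i j = d j * a j i
  a_bound : ∀ i j, i ≠ j → a i j * a j i ≤ 3
  cm_offdiag : ∀ i j, i ≠ j → cm i j = coxEntry (a i j * a j i)
  finiteWeyl : Finite cm.Group

/-- `ε_{ij} = (-1)^{δ_{ij}}`. -/
def eps {I : Type} [DecidableEq I] (i j : I) : ℤ := if i = j then -1 else 1

/-- The alternating composition `f ∘ g ∘ f ∘ ⋯` with `n` factors. -/
def braidWord {α : Type*} (f g : α → α) : ℕ → (α → α)
  | 0 => id
  | n + 1 => f ∘ braidWord g f n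

/-- Integer powers of a power series over `ℂ` (the `k`-th power of a unit, `k ∈ ℤ`). -/
def zpowPS (f : PowerSeries ℂ) : ℤ → PowerSeries ℂ
  | Int.ofNat n => f ^ n
  | Int.negSucc n => (f ^ (n + 1))⁻¹

/-- The additive shift `τ_c`: substitution of the power series `X·(1+cX)⁻¹`
(which has zero constant term) into a formal power series. -/
def tauSub (c : ℂ) (f : PowerSeries ℂ) : PowerSeries ℂ :=
  PowerSeries.mk fun m => ∑ n ∈ Finset.range (m + 1),
    coeff (R := ℂ) n f * coeff (R := ℂ) m ((X * (1 + C (R := ℂ) c * X)⁻¹ : PowerSeries ℂ) ^ n)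

/-- The set `𝒯^I` of `I`-tuples of power series with constant term `1`. -/
def Tset (I : Type) : Set (I → PowerSeries ℂ) :=
  {lam | ∀ i, constantCoeff (R := ℂ) (lam i) = 1}

/-- The operator `σ_j` on `𝒯^I`:
`σ_j(λ)_i = λ_i · ∏_{k=0}^{|a_{ji}|−1} (τ_{−(ħ d_j/2)(|a_{ji}|−2k)} λ_j)^{ε_{ij}}`. -/
def sigmaT {I : Type} [DecidableEq I] (a : I → I → ℤ) (d : I → ℤ) (hbar : ℂ)
    (j : I) (lam : I → PowerSeries ℂ) : I → PowerSeries ℂ := fun i =>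
  lam i * ∏ k ∈ Finset.range (a j i).natAbs,
    zpowPS (tauSub (-(hbar * (d j : ℂ) / 2) * (((a j i).natAbs : ℂ) - 2 * (k : ℂ))) (lam j))
      (eps i j)

/-- The operator `σ'_j` on `𝒯^I`:
`σ'_j(λ)_i = λ_i · ∏_{k=1}^{|a_{ji}|} (τ_{−(ħ d_j/2)(|a_{ji}|−2k)} λ_j)^{ε_{ij}}`. -/
def sigmaT' {I : Type} [DecidableEq I] (a : I → I → ℤ) (d : I → ℤ) (hbar : ℂ)
    (j : I) (lam : I → PowerSeries ℂ) : I → PowerSeries ℂ := fun i =>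
  lam i * ∏ k ∈ Finset.Icc 1 (a j i).natAbs,
    zpowPS (tauSub (-(hbar * (d j : ℂ) / 2) * (((a j i).natAbs : ℂ) - 2 * (k : ℂ))) (lam j))
      (eps i j)

namespace TauAux

/-- substitution of `g` (zero constant term) into `f` -/
def S (g f : PowerSeries ℂ) : PowerSeries ℂ :=
  PowerSeries.mk fun m => ∑ n ∈ Finset.range (m + 1), coeff (R := ℂ) n f * coeff (R := ℂ) m (g ^ n)

lemma coeff_pow_zero {g : PowerSeries ℂ} (hg : constantCoeff (R := ℂ) g = 0)
    {m n : ℕ} (h : m < n) : coeff (R := ℂ) m (g ^ n) = 0 := by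
  have h1 : (X : PowerSeries ℂ) ^ n ∣ g ^ n :=
    pow_dvd_pow_of_dvd (X_dvd_iff.mpr hg) n
  exact X_pow_dvd_iff.mp h1 m h

lemma coeff_S (g f : PowerSeries ℂ) (m : ℕ) :
    coeff (R := ℂ) m (S g f) = ∑ n ∈ Finset.range (m + 1), coeff (R := ℂ) n f * coeff (R := ℂ) m (g ^ n) := by
  simp [S]

lemma coeff_S_ext {g : PowerSeries ℂ} (hg : constantCoeff (R := ℂ) g = 0) (f : PowerSeries ℂ)
    {m N : ℕ} (h : m < N) :
    coeff (R := ℂ) m (S g f) = ∑ n ∈ Finset.range N, coeff (R := ℂ) n f * coeff (R := ℂ) m (g ^ n) := by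
  rw [coeff_S]
  refine Finset.sum_subset (Finset.range_subset_range.mpr h) ?_
  intro x hx hx'
  rw [coeff_pow_zero hg (by simp at hx hx' ⊢; omega), mul_zero]

lemma S_add (g f₁ f₂ : PowerSeries ℂ) : S g (f₁ + f₂) = S g f₁ + S g f₂ := by
  ext m
  simp [coeff_S, add_mul, Finset.sum_add_distrib]

lemma S_one (g : PowerSeries ℂ) : S g 1 = 1 := by
  ext m
  rw [coeff_S, Finset.sum_eq_single 0]
  · simp
  · intro n _ hn
    simp [coeff_one, hn]
  · simp

lemma triangle_sum {M : Type*} [AddCommMonoid M] (m : ℕ) (F : ℕ → ℕ → M)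
    (hF : ∀ p q, m < p + q → F p q = 0) :
    ∑ n ∈ Finset.range (m + 1), ∑ pq ∈ Finset.HasAntidiagonal.antidiagonal n, F pq.1 pq.2
      = ∑ p ∈ Finset.range (m + 1), ∑ q ∈ Finset.range (m + 1), F p q := by
  rw [← Finset.sum_biUnion (fun x hx y hy hxy => Finset.disjoint_left.mpr ?_),
      ← Finset.sum_product']
  · refine Finset.sum_subset ?_ ?_
    · intro pq hpq
      simp only [Finset.mem_biUnion, Finset.mem_range, Finset.HasAntidiagonal.mem_antidiagonal] at hpq
      obtain ⟨n, hn, hpqn⟩ := hpq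
      simp only [Finset.mem_product, Finset.mem_range]
      omega
    · intro pq hpq hpq'
      refine hF pq.1 pq.2 ?_
      by_contra hle
      exact hpq' (Finset.mem_biUnion.mpr ⟨pq.1 + pq.2, Finset.mem_range.mpr (by omega),
        Finset.HasAntidiagonal.mem_antidiagonal.mpr rfl⟩)
  · intro a ha
    simp only [Finset.HasAntidiagonal.mem_antidiagonal] at ha
    intro hb
    simp only [Finset.HasAntidiagonal.mem_antidiagonal] at hb
    omega

lemma S_mul {g : PowerSeries ℂ} (hg : constantCoeff (R := ℂ) g = 0) (f₁ f₂ : PowerSeries ℂ) :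
    S g (f₁ * f₂) = S g f₁ * S g f₂ := by
  ext m
  have hL : coeff (R := ℂ) m (S g (f₁ * f₂))
      = ∑ p ∈ Finset.range (m+1), ∑ q ∈ Finset.range (m+1),
          coeff (R := ℂ) p f₁ * coeff (R := ℂ) q f₂ * coeff (R := ℂ) m (g ^ (p + q)) := by
    rw [coeff_S, ← triangle_sum m (fun p q => coeff (R := ℂ) p f₁ * coeff (R := ℂ) q f₂ * coeff (R := ℂ) m (g ^ (p+q)))
        (fun p q h => by simp only [coeff_pow_zero hg h, mul_zero])]
    refine Finset.sum_congr rfl fun n hn => ?_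
    rw [coeff_mul, Finset.sum_mul]
    refine Finset.sum_congr rfl fun pq hpq => ?_
    rw [← Finset.HasAntidiagonal.mem_antidiagonal.mp hpq]
  rw [hL, coeff_mul]
  refine Eq.symm ?_
  have : ∀ pq ∈ Finset.HasAntidiagonal.antidiagonal m,
      coeff (R := ℂ) pq.1 (S g f₁) * coeff (R := ℂ) pq.2 (S g f₂)
        = ∑ p ∈ Finset.range (m+1), ∑ q ∈ Finset.range (m+1),
            coeff (R := ℂ) p f₁ * coeff (R := ℂ) q f₂ * (coeff (R := ℂ) pq.1 (g ^ p) * coeff (R := ℂ) pq.2 (g ^ q)) := by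
    intro pq hpq
    have h1 : pq.1 < m + 1 := by have := Finset.HasAntidiagonal.mem_antidiagonal.mp hpq; omega
    have h2 : pq.2 < m + 1 := by have := Finset.HasAntidiagonal.mem_antidiagonal.mp hpq; omega
    rw [coeff_S_ext hg f₁ h1, coeff_S_ext hg f₂ h2, Finset.sum_mul_sum]
    exact Finset.sum_congr rfl fun p _ => Finset.sum_congr rfl fun q _ => by ring
  calc ∑ pq ∈ Finset.HasAntidiagonal.antidiagonal m, coeff (R := ℂ) pq.1 (S g f₁) * coeff (R := ℂ) pq.2 (S g f₂)
      = ∑ pq ∈ Finset.HasAntidiagonal.antidiagonal m, ∑ p ∈ Finset.range (m+1), ∑ q ∈ Finset.range (m+1),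
          coeff (R := ℂ) p f₁ * coeff (R := ℂ) q f₂ * (coeff (R := ℂ) pq.1 (g ^ p) * coeff (R := ℂ) pq.2 (g ^ q)) :=
        Finset.sum_congr rfl this
    _ = ∑ p ∈ Finset.range (m+1), ∑ pq ∈ Finset.HasAntidiagonal.antidiagonal m, ∑ q ∈ Finset.range (m+1),
          coeff (R := ℂ) p f₁ * coeff (R := ℂ) q f₂ * (coeff (R := ℂ) pq.1 (g ^ p) * coeff (R := ℂ) pq.2 (g ^ q)) :=
        Finset.sum_comm
    _ = ∑ p ∈ Finset.range (m+1), ∑ q ∈ Finset.range (m+1), ∑ pq ∈ Finset.HasAntidiagonal.antidiagonal m,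
          coeff (R := ℂ) p f₁ * coeff (R := ℂ) q f₂ * (coeff (R := ℂ) pq.1 (g ^ p) * coeff (R := ℂ) pq.2 (g ^ q)) :=
        Finset.sum_congr rfl fun p _ => Finset.sum_comm
    _ = ∑ p ∈ Finset.range (m+1), ∑ q ∈ Finset.range (m+1),
          coeff (R := ℂ) p f₁ * coeff (R := ℂ) q f₂ * coeff (R := ℂ) m (g ^ (p + q)) := by
        refine Finset.sum_congr rfl fun p _ => Finset.sum_congr rfl fun q _ => ?_
        rw [← Finset.mul_sum, ← coeff_mul, ← pow_add]

lemma S_zero (g : PowerSeries ℂ) : S g 0 = 0 := by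
  ext m; simp [coeff_S]

/-- `S g` as a ring homomorphism. -/
def Shom (g : PowerSeries ℂ) (hg : constantCoeff (R := ℂ) g = 0) : PowerSeries ℂ →+* PowerSeries ℂ where
  toFun := S g
  map_one' := S_one g
  map_mul' := S_mul hg
  map_zero' := S_zero g
  map_add' := S_add g

lemma S_pow {g : PowerSeries ℂ} (hg : constantCoeff (R := ℂ) g = 0) (f : PowerSeries ℂ) (p : ℕ) :
    S g (f ^ p) = (S g f) ^ p := map_pow (Shom g hg) f p

lemma S_X (g : PowerSeries ℂ) (hg : constantCoeff (R := ℂ) g = 0) : S g X = g := by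
  ext m
  rw [coeff_S_ext hg X (show m < m + 2 by omega), Finset.sum_eq_single 1]
  · simp
  · intro n _ hn
    simp [coeff_X, hn]
  · simp

lemma constantCoeff_S (g f : PowerSeries ℂ) : constantCoeff (R := ℂ) (S g f) = constantCoeff (R := ℂ) f := by
  have := coeff_S g f 0
  simpa using this

lemma S_inv {g : PowerSeries ℂ} (hg : constantCoeff (R := ℂ) g = 0) {f : PowerSeries ℂ}
    (hf : constantCoeff (R := ℂ) f ≠ 0) : S g f⁻¹ = (S g f)⁻¹ := by
  have h : constantCoeff (R := ℂ) (S g f) ≠ 0 := by rw [constantCoeff_S]; exact hf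
  rw [PowerSeries.eq_inv_iff_mul_eq_one h, ← S_mul hg, PowerSeries.inv_mul_cancel f hf, S_one]

lemma S_comp {g h : PowerSeries ℂ} (hg : constantCoeff (R := ℂ) g = 0)
    (hh : constantCoeff (R := ℂ) h = 0) (f : PowerSeries ℂ) :
    S g (S h f) = S (S g h) f := by
  ext m
  rw [coeff_S]
  have hsh : constantCoeff (R := ℂ) (S g h) = 0 := by rw [constantCoeff_S]; exact hh
  calc ∑ n ∈ Finset.range (m + 1), coeff (R := ℂ) n (S h f) * coeff (R := ℂ) m (g ^ n)
      = ∑ n ∈ Finset.range (m + 1), ∑ p ∈ Finset.range (m + 1),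
          coeff (R := ℂ) p f * coeff (R := ℂ) n (h ^ p) * coeff (R := ℂ) m (g ^ n) := by
        refine Finset.sum_congr rfl fun n hn => ?_
        rw [coeff_S_ext hh f (Finset.mem_range.mp hn), Finset.sum_mul]
    _ = ∑ p ∈ Finset.range (m + 1), ∑ n ∈ Finset.range (m + 1),
          coeff (R := ℂ) p f * coeff (R := ℂ) n (h ^ p) * coeff (R := ℂ) m (g ^ n) := Finset.sum_comm
    _ = ∑ p ∈ Finset.range (m + 1), coeff (R := ℂ) p f * coeff (R := ℂ) m ((S g h) ^ p) := by
        refine Finset.sum_congr rfl fun p _ => ?_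
        rw [← S_pow hg h p, coeff_S]
        rw [Finset.mul_sum]
        refine Finset.sum_congr rfl fun n _ => by ring
    _ = coeff (R := ℂ) m (S (S g h) f) := (coeff_S _ f m).symm

end TauAux

namespace TauAux

/-- the substituted series `X (1+cX)⁻¹` -/
def gc (c : ℂ) : PowerSeries ℂ := X * (1 + C (R := ℂ) c * X)⁻¹

lemma constantCoeff_gc (c : ℂ) : constantCoeff (R := ℂ) (gc c) = 0 := by
  simp [gc]

lemma tauSub_eq_S (c : ℂ) (f : PowerSeries ℂ) : tauSub c f = S (gc c) f := rfl

lemma S_C (g : PowerSeries ℂ) (r : ℂ) : S g (C (R := ℂ) r) = C (R := ℂ) r := by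
  ext m
  rw [coeff_S, Finset.sum_eq_single 0]
  · simp [coeff_C, coeff_one]
  · intro n _ hn
    simp [coeff_C, hn]
  · simp

lemma S_X_id (f : PowerSeries ℂ) : S X f = f := by
  ext m
  rw [coeff_S, Finset.sum_eq_single m]
  · simp
  · intro n _ hn
    simp [coeff_X_pow, Ne.symm hn]
  · simp

lemma ps_inv_one : (1 : PowerSeries ℂ)⁻¹ = 1 := by
  rw [← map_one (C (R := ℂ)), PowerSeries.C_inv]; simp

lemma tau_zero (f : PowerSeries ℂ) : tauSub 0 f = f := by
  rw [tauSub_eq_S]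
  have : gc 0 = X := by simp [gc, ps_inv_one]
  rw [this, S_X_id]

lemma constantCoeff_tau (c : ℂ) (f : PowerSeries ℂ) :
    constantCoeff (R := ℂ) (tauSub c f) = constantCoeff (R := ℂ) f := by
  rw [tauSub_eq_S]; exact constantCoeff_S _ _

lemma tau_inv (c : ℂ) {f : PowerSeries ℂ} (hf : constantCoeff (R := ℂ) f ≠ 0) :
    tauSub c f⁻¹ = (tauSub c f)⁻¹ := by
  rw [tauSub_eq_S, tauSub_eq_S]; exact S_inv (constantCoeff_gc c) hf

lemma gc_comp (a b : ℂ) : S (gc a) (gc b) = gc (a + b) := by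
  set u : PowerSeries ℂ := 1 + C (R := ℂ) a * X with hu_def
  set v : PowerSeries ℂ := 1 + C (R := ℂ) (a + b) * X with hv_def
  have hu1 : constantCoeff (R := ℂ) u = 1 := by simp [hu_def]
  have hv1 : constantCoeff (R := ℂ) v = 1 := by simp [hv_def]
  have hu : u * u⁻¹ = 1 := PowerSeries.mul_inv_cancel _ (by rw [hu1]; norm_num)
  have hu' : u⁻¹ * u = 1 := PowerSeries.inv_mul_cancel _ (by rw [hu1]; norm_num)
  have hstep : S (gc a) (gc b) = gc a * (1 + C (R := ℂ) b * gc a)⁻¹ := by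
    rw [show gc b = X * (1 + C (R := ℂ) b * X)⁻¹ from rfl,
        S_mul (constantCoeff_gc a), S_X _ (constantCoeff_gc a),
        S_inv (constantCoeff_gc a) (by simp),
        S_add, S_one, S_mul (constantCoeff_gc a), S_C, S_X _ (constantCoeff_gc a)]
  have h1 : 1 + C (R := ℂ) b * gc a = v * u⁻¹ := by
    have hv : v = u + C (R := ℂ) b * X := by
      rw [hu_def, hv_def, map_add (C (R := ℂ))]; ring
    rw [hv, add_mul, hu, gc, mul_assoc]
  have huu : (u⁻¹)⁻¹ = u := by
    refine ((PowerSeries.eq_inv_iff_mul_eq_one ?_).mpr hu).symm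
    rw [PowerSeries.constantCoeff_inv, hu1]; norm_num
  rw [hstep, h1, PowerSeries.mul_inv_rev, huu, gc, gc]
  rw [mul_assoc, ← mul_assoc (u⁻¹), hu', one_mul]

lemma tau_comp (a b : ℂ) (f : PowerSeries ℂ) :
    tauSub a (tauSub b f) = tauSub (a + b) f := by
  rw [tauSub_eq_S, tauSub_eq_S, tauSub_eq_S,
      S_comp (constantCoeff_gc a) (constantCoeff_gc b), gc_comp]

end TauAux


section MainAux

open TauAux

lemma zpowPS_one (f : PowerSeries ℂ) : zpowPS f 1 = f := pow_one f

lemma zpowPS_neg_one (f : PowerSeries ℂ) : zpowPS f (-1) = f⁻¹ := by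
  show (f ^ (0 + 1))⁻¹ = f⁻¹
  rw [pow_one]

lemma zpow_inv_comm {e : ℤ} (he : e = 1 ∨ e = -1) (f : PowerSeries ℂ) :
    zpowPS f⁻¹ e = (zpowPS f e)⁻¹ := by
  rcases he with rfl | rfl <;> simp [zpowPS_one, zpowPS_neg_one]

lemma constantCoeff_zpow {e : ℤ} (he : e = 1 ∨ e = -1) {f : PowerSeries ℂ}
    (hf : constantCoeff (R := ℂ) f = 1) : constantCoeff (R := ℂ) (zpowPS f e) = 1 := by
  rcases he with rfl | rfl <;>
    simp [zpowPS_one, zpowPS_neg_one, PowerSeries.constantCoeff_inv, hf]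

lemma eps_cases {I : Type} [DecidableEq I] (i j : I) : eps i j = 1 ∨ eps i j = -1 := by
  unfold eps; split <;> simp

lemma Icc_eq_image (n : ℕ) : Finset.Icc 1 n = Finset.image (· + 1) (Finset.range n) := by
  ext x
  simp only [Finset.mem_Icc, Finset.mem_image, Finset.mem_range]
  constructor
  · rintro ⟨h1, h2⟩; exact ⟨x - 1, by omega, by omega⟩
  · rintro ⟨y, hy, rfl⟩; omega

lemma key1 (L : PowerSeries ℂ) (hL : constantCoeff (R := ℂ) L = 1) (e : ℤ) (he : e = 1 ∨ e = -1)
    (c b : ℂ) (hb : b = -(2 * c)) (n : ℕ) (lami : PowerSeries ℂ) :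
    (lami * ∏ k ∈ Finset.Icc 1 n, zpowPS (tauSub (c * ((n : ℂ) - 2 * (k : ℂ))) L) e) *
      ∏ k ∈ Finset.range n,
        zpowPS (tauSub (c * ((n : ℂ) - 2 * (k : ℂ))) ((tauSub b L)⁻¹)) e = lami := by
  have hG : ∀ k : ℕ, constantCoeff (R := ℂ)
      (zpowPS (tauSub (c * ((n : ℂ) - 2 * ((k + 1 : ℕ) : ℂ))) L) e) = 1 :=
    fun k => constantCoeff_zpow he (by rw [constantCoeff_tau, hL])
  have hQ : ∀ k ∈ Finset.range n,
      zpowPS (tauSub (c * ((n : ℂ) - 2 * (k : ℂ))) ((tauSub b L)⁻¹)) e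
        = (zpowPS (tauSub (c * ((n : ℂ) - 2 * ((k + 1 : ℕ) : ℂ))) L) e)⁻¹ := by
    intro k _
    have harg : c * ((n : ℂ) - 2 * (k : ℂ)) + b = c * ((n : ℂ) - 2 * ((k + 1 : ℕ) : ℂ)) := by
      push_cast; rw [hb]; ring
    rw [tau_inv _ (by rw [constantCoeff_tau, hL]; norm_num), tau_comp, harg,
        zpow_inv_comm he]
  rw [Finset.prod_congr rfl hQ, Icc_eq_image,
      Finset.prod_image (fun x _ y _ h => by omega), mul_assoc,
      ← Finset.prod_mul_distrib]
  have : ∀ k ∈ Finset.range n,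
      zpowPS (tauSub (c * ((n : ℂ) - 2 * ((k + 1 : ℕ) : ℂ))) L) e *
        (zpowPS (tauSub (c * ((n : ℂ) - 2 * ((k + 1 : ℕ) : ℂ))) L) e)⁻¹ = 1 :=
    fun k _ => PowerSeries.mul_inv_cancel _ (by rw [hG k]; norm_num)
  rw [Finset.prod_congr rfl this, Finset.prod_const_one, mul_one]

lemma key2 (L : PowerSeries ℂ) (hL : constantCoeff (R := ℂ) L = 1) (e : ℤ) (he : e = 1 ∨ e = -1)
    (c b : ℂ) (hb : b = 2 * c) (n : ℕ) (lami : PowerSeries ℂ) :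
    (lami * ∏ k ∈ Finset.range n, zpowPS (tauSub (c * ((n : ℂ) - 2 * (k : ℂ))) L) e) *
      ∏ k ∈ Finset.Icc 1 n,
        zpowPS (tauSub (c * ((n : ℂ) - 2 * (k : ℂ))) ((tauSub b L)⁻¹)) e = lami := by
  have hQ : ∀ k ∈ Finset.Icc 1 n,
      zpowPS (tauSub (c * ((n : ℂ) - 2 * (k : ℂ))) ((tauSub b L)⁻¹)) e
        = (zpowPS (tauSub (c * ((n : ℂ) - 2 * ((k - 1 : ℕ) : ℂ))) L) e)⁻¹ := by
    intro k hk
    have hk1 : 1 ≤ k := (Finset.mem_Icc.mp hk).1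
    have hc1 : ((k - 1 : ℕ) : ℂ) = (k : ℂ) - 1 := by
      have h2 : ((k - 1 : ℕ) + 1 : ℕ) = k := by omega
      calc ((k - 1 : ℕ) : ℂ) = (((k - 1 : ℕ) + 1 : ℕ) : ℂ) - 1 := by push_cast; ring
        _ = (k : ℂ) - 1 := by rw [h2]
    have harg : c * ((n : ℂ) - 2 * (k : ℂ)) + b = c * ((n : ℂ) - 2 * ((k - 1 : ℕ) : ℂ)) := by
      rw [hc1, hb]; ring
    rw [tau_inv _ (by rw [constantCoeff_tau, hL]; norm_num), tau_comp, harg,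
        zpow_inv_comm he]
  rw [Finset.prod_congr rfl hQ, Icc_eq_image,
      Finset.prod_image (fun x _ y _ h => by omega)]
  have hsimp : ∀ k ∈ Finset.range n,
      (zpowPS (tauSub (c * ((n : ℂ) - 2 * ((k + 1 - 1 : ℕ) : ℂ))) L) e)⁻¹
        = (zpowPS (tauSub (c * ((n : ℂ) - 2 * (k : ℂ))) L) e)⁻¹ := by
    intro k _
    norm_num
  rw [Finset.prod_congr rfl hsimp, mul_assoc, ← Finset.prod_mul_distrib]
  have : ∀ k ∈ Finset.range n,
      zpowPS (tauSub (c * ((n : ℂ) - 2 * (k : ℂ))) L) e *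
        (zpowPS (tauSub (c * ((n : ℂ) - 2 * (k : ℂ))) L) e)⁻¹ = 1 :=
    fun k _ => PowerSeries.mul_inv_cancel _
      (by rw [constantCoeff_zpow he (by rw [constantCoeff_tau, hL])]; norm_num)
  rw [Finset.prod_congr rfl this, Finset.prod_const_one, mul_one]

end MainAux


open TauAux in
lemma sigmaT'_at_j {I : Type} [DecidableEq I] (a : I → I → ℤ) (d : I → ℤ) (hbar : ℂ)
    (j : I) (lam : I → PowerSeries ℂ) (hL : constantCoeff (R := ℂ) (lam j) = 1)
    (hajj : a j j = 2) :
    sigmaT' a d hbar j lam j = (tauSub (hbar * ((d j : ℤ) : ℂ)) (lam j))⁻¹ := by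
  simp only [sigmaT', hajj]
  rw [show ((2:ℤ).natAbs) = 2 from rfl,
      show Finset.Icc 1 2 = {1, 2} from by decide,
      Finset.prod_insert (by decide), Finset.prod_singleton,
      show eps j j = -1 from by simp [eps],
      zpowPS_neg_one, zpowPS_neg_one]
  rw [show -(hbar * ((d j : ℤ) : ℂ) / 2) * (((2:ℕ) : ℂ) - 2 * ((1:ℕ) : ℂ)) = 0 from by
        push_cast; ring,
      show -(hbar * ((d j : ℤ) : ℂ) / 2) * (((2:ℕ) : ℂ) - 2 * ((2:ℕ) : ℂ))
          = hbar * ((d j : ℤ) : ℂ) from by push_cast; ring,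
      tau_zero, ← mul_assoc, PowerSeries.mul_inv_cancel _ (by rw [hL]; norm_num), one_mul]


open TauAux in
lemma sigmaT_at_j {I : Type} [DecidableEq I] (a : I → I → ℤ) (d : I → ℤ) (hbar : ℂ)
    (j : I) (lam : I → PowerSeries ℂ) (hL : constantCoeff (R := ℂ) (lam j) = 1)
    (hajj : a j j = 2) :
    sigmaT a d hbar j lam j = (tauSub (-(hbar * ((d j : ℤ) : ℂ))) (lam j))⁻¹ := by
  simp only [sigmaT, hajj]
  rw [show ((2:ℤ).natAbs) = 2 from rfl,
      Finset.prod_range_succ, Finset.prod_range_one,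
      show eps j j = -1 from by simp [eps],
      zpowPS_neg_one, zpowPS_neg_one,
      show -(hbar * ((d j : ℤ) : ℂ) / 2) * (((2:ℕ) : ℂ) - 2 * ((0:ℕ) : ℂ))
          = -(hbar * ((d j : ℤ) : ℂ)) from by push_cast; ring,
      show -(hbar * ((d j : ℤ) : ℂ) / 2) * (((2:ℕ) : ℂ) - 2 * ((1:ℕ) : ℂ)) = 0 from by
        push_cast; ring,
      tau_zero, mul_comm ((tauSub (-(hbar * ((d j : ℤ) : ℂ))) (lam j))⁻¹) ((lam j)⁻¹),
      ← mul_assoc, PowerSeries.mul_inv_cancel _ (by rw [hL]; norm_num), one_mul]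

/-- `σ'_j` is a two-sided inverse of `σ_j` on `𝒯^I`:
`σ_j ∘ σ'_j = σ'_j ∘ σ_j = id` on `𝒯^I`. -/
theorem sigmaT'_two_sided_inverse
    {I : Type} [Fintype I] [DecidableEq I] (𝒞 : FiniteCartan I) (hbar : ℂ)
    (hhbar : hbar ≠ 0) (j : I) :
    Set.EqOn (sigmaT 𝒞.a 𝒞.d hbar j ∘ sigmaT' 𝒞.a 𝒞.d hbar j) id (Tset I) ∧
    Set.EqOn (sigmaT' 𝒞.a 𝒞.d hbar j ∘ sigmaT 𝒞.a 𝒞.d hbar j) id (Tset I) := by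
  constructor
  · intro lam hlam
    simp only [Function.comp_apply, id_eq]
    funext i
    have hL : constantCoeff (R := ℂ) (lam j) = 1 := hlam j
    have hj := sigmaT'_at_j 𝒞.a 𝒞.d hbar j lam hL (𝒞.a_diag j)
    show sigmaT 𝒞.a 𝒞.d hbar j (sigmaT' 𝒞.a 𝒞.d hbar j lam) i = lam i
    simp only [sigmaT]
    rw [hj]
    simp only [sigmaT']
    exact key1 (lam j) hL (eps i j) (eps_cases i j) _ _ (by ring) _ (lam i)
  · intro lam hlam
    simp only [Function.comp_apply, id_eq]
    funext i
    have hL : constantCoeff (R := ℂ) (lam j) = 1 := hlam j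
    have hj := sigmaT_at_j 𝒞.a 𝒞.d hbar j lam hL (𝒞.a_diag j)
    show sigmaT' 𝒞.a 𝒞.d hbar j (sigmaT 𝒞.a 𝒞.d hbar j lam) i = lam i
    simp only [sigmaT']
    rw [hj]
    simp only [sigmaT]
    exact key2 (lam j) hL (eps i j) (eps_cases i j) _ _ (by ring) _ (lam i)
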